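/- With constant total Hashrate, if the miner's first-period absolute revenue is below honest revenue but his relative revenue is above it, i.e. R < α < R/n with 0 < n < 1 and α ∈ (0,1), then the set of periods at which selfish mining is cumulatively profitable is exactly an upper ray: a_k = k·R/(1 + (k−1)·n) > α if and only if k > α(1−n)/(R − α·n); in particular there is a minimal integer K ≥ 2 (the profitable delay) such that a_k > α precisely when k ≥ K. -/
import Mathlib


/-- Cumulative absolute revenue after k difficulty-adjustment periods with
constant total Hashrate: a_k = k·R/(1+(k-1)·n). -/
noncomputable def cumRev (R n : ℝ) (k : ℕ) : ℝ := (k : ℝ) * R / (1 + ((k : ℝ) - 1) * n)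

/-- If the first-period absolute revenue is below honest revenue but the relative
revenue is above it (R < α < R/n), then cumulative profitability is exactly an
upper ray: a_k > α iff k > α(1−n)/(R−α·n); in particular there is a minimal
integer K ≥ 2 such that a_k > α precisely when k ≥ K. -/
theorem profitable_delay_ray (R n α : ℝ)
    (hR : 0 < R) (hRn : R ≤ n) (hn0 : 0 < n) (hn1 : n < 1)
    (hα0 : 0 < α) (hα1 : α < 1) (hlow : R < α) (hhigh : α < R / n) :
    (∀ k : ℕ, 1 ≤ k →
      (cumRev R n k > α ↔ (k : ℝ) > α * (1 - n) / (R - α * n))) ∧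
    (∃ K : ℕ, 2 ≤ K ∧ ∀ k : ℕ, 1 ≤ k → (cumRev R n k > α ↔ K ≤ k)) := by
  have hden : R - α * n > 0 := by
    nlinarith [(lt_div_iff₀ hn0).mp hhigh]
  have hmain : ∀ k : ℕ, 1 ≤ k →
      (cumRev R n k > α ↔ (k : ℝ) > α * (1 - n) / (R - α * n)) := by
    intro k hk
    have hk1 : (1:ℝ) ≤ (k:ℝ) := by exact_mod_cast hk
    have hpos : 0 < 1 + ((k : ℝ) - 1) * n := by nlinarith
    unfold cumRev
    rw [gt_iff_lt, lt_div_iff₀ hpos, gt_iff_lt, div_lt_iff₀ hden]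
    constructor <;> intro h <;> nlinarith
  refine ⟨hmain, ?_⟩
  set c : ℝ := α * (1 - n) / (R - α * n) with hc
  have hc0 : 0 ≤ c := by
    apply div_nonneg <;> nlinarith
  have hc1 : 1 ≤ c := by
    by_contra h
    push_neg at h
    have := (hmain 1 le_rfl).mpr (by push_cast; linarith)
    unfold cumRev at this
    norm_num at this
    linarith
  refine ⟨Nat.floor c + 1, ?_, ?_⟩
  · have : 1 ≤ Nat.floor c := (Nat.one_le_floor_iff c).mpr hc1
    omega
  · intro k hk
    rw [hmain k hk]
    constructor
    · intro h
      have : Nat.floor c < k := (Nat.floor_lt hc0).mpr h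
      omega
    · intro h
      have h1 : Nat.floor c < k := by omega
      have := (Nat.floor_lt hc0).mp h1
      exact this
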